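/- arXiv:math/0509545 — 2 statements merged into one kernel-verified Lean document; each statement's English description precedes it below -/
import Mathlib

section
/- There is a constant C such that for all nonzero ξ, η ∈ ℝ³, the operator norm of the matrix product Π_+(ξ)Π_-(η) satisfies ‖Π_+(ξ)Π_-(η)‖ ≤ C θ, where θ = ∠(ξ,η) is the angle between ξ and η. -/
noncomputable section
open Matrix Complex

/-- The Pauli matrices σ¹, σ², σ³. -/
def pauli : Fin 3 → Matrix (Fin 2) (Fin 2) ℂ :=
  ![!![0, 1; 1, 0], !![0, -I; I, 0], !![1, 0; 0, -1]]

/-- The Dirac matrix γ⁰ = [[I,0],[0,-I]]. -/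
def gamma0 : Matrix (Fin 4) (Fin 4) ℂ :=
  !![1,0,0,0; 0,1,0,0; 0,0,-1,0; 0,0,0,-1]

/-- The Dirac matrices γ¹, γ², γ³ = [[0,σʲ],[-σʲ,0]]. -/
def gammaS : Fin 3 → Matrix (Fin 4) (Fin 4) ℂ :=
  ![!![0,0,0,1; 0,0,1,0; 0,-1,0,0; -1,0,0,0],
    !![0,0,0,-I; 0,0,I,0; 0,I,0,0; -I,0,0,0],
    !![0,0,1,0; 0,0,0,-1; -1,0,0,0; 0,1,0,0]]

/-- The matrices αʲ = γ⁰γʲ. -/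
def alphaM (j : Fin 3) : Matrix (Fin 4) (Fin 4) ℂ := gamma0 * gammaS j

/-- The matrices Sᵐ = [[σᵐ,0],[0,σᵐ]]. -/
def Smat : Fin 3 → Matrix (Fin 4) (Fin 4) ℂ :=
  ![!![0,1,0,0; 1,0,0,0; 0,0,0,1; 0,0,1,0],
    !![0,-I,0,0; I,0,0,0; 0,0,0,-I; 0,0,I,0],
    !![1,0,0,0; 0,-1,0,0; 0,0,1,0; 0,0,0,-1]]

/-- The Levi-Civita symbol on {1,2,3} (as a complex number). -/
def lc (j k l : Fin 3) : ℂ :=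
  ![![![0,0,0], ![0,0,1], ![0,-1,0]],
    ![![0,0,-1], ![0,0,0], ![1,0,0]],
    ![![0,1,0], ![-1,0,0], ![0,0,0]]] j k l

/-- The symbol ξ·α = Σⱼ ξⱼ αʲ of the operator -iα·∇. -/
def dotAlpha (ξ : EuclideanSpace ℝ (Fin 3)) : Matrix (Fin 4) (Fin 4) ℂ :=
  ∑ j, (ξ j : ℂ) • alphaM j

/-- The projection Π₊(ξ) = ½(I + ξ̂·α). -/
def projP (ξ : EuclideanSpace ℝ (Fin 3)) : Matrix (Fin 4) (Fin 4) ℂ :=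
  (2 : ℂ)⁻¹ • (1 + dotAlpha (‖ξ‖⁻¹ • ξ))

/-- The projection Π₋(ξ) = ½(I - ξ̂·α). -/
def projM (ξ : EuclideanSpace ℝ (Fin 3)) : Matrix (Fin 4) (Fin 4) ℂ :=
  (2 : ℂ)⁻¹ • (1 - dotAlpha (‖ξ‖⁻¹ • ξ))

set_option maxHeartbeats 1000000
set_option synthInstance.maxHeartbeats 1000000
open scoped RealInnerProductSpace

lemma aux_alphaM_eq : alphaM =
    ![!![0,0,0,1; 0,0,1,0; 0,1,0,0; 1,0,0,0],
      !![0,0,0,-I; 0,0,I,0; 0,-I,0,0; I,0,0,0],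
      !![0,0,1,0; 0,0,0,-1; 1,0,0,0; 0,-1,0,0]] := by
  funext j
  fin_cases j <;> · ext i k; fin_cases i <;> fin_cases k <;>
    simp [alphaM, gamma0, gammaS, Matrix.mul_apply, Fin.sum_univ_four]
      <;> simp [Matrix.vecHead, Matrix.vecTail]

lemma aux_dotAlpha_eq (v : EuclideanSpace ℝ (Fin 3)) :
    dotAlpha v = !![0, 0, (v 2 : ℂ), (v 0 : ℂ) - v 1 * I;
                    0, 0, (v 0 : ℂ) + v 1 * I, -(v 2 : ℂ);
                    (v 2 : ℂ), (v 0 : ℂ) - v 1 * I, 0, 0;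
                    (v 0 : ℂ) + v 1 * I, -(v 2 : ℂ), 0, 0] := by
  rw [show dotAlpha v = ∑ j, (v j : ℂ) • alphaM j from rfl, aux_alphaM_eq, Fin.sum_univ_three]
  ext i j
  fin_cases i <;> fin_cases j <;>
    simp [Matrix.vecHead, Matrix.vecTail] <;> ring

lemma aux_norm_sq_eq (v : EuclideanSpace ℝ (Fin 3)) : ‖v‖^2 = v 0^2 + v 1^2 + v 2^2 := by
  rw [EuclideanSpace.norm_eq, Real.sq_sqrt (by positivity)]
  simp [Fin.sum_univ_three, sq_abs]

lemma aux_dotAlpha_sq (v : EuclideanSpace ℝ (Fin 3)) :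
    dotAlpha v * dotAlpha v = ((‖v‖^2 : ℝ) : ℂ) • 1 := by
  rw [aux_norm_sq_eq, aux_dotAlpha_eq]
  ext i j
  fin_cases i <;> fin_cases j <;>
    simp [Matrix.mul_apply, Fin.sum_univ_four, Matrix.one_apply, Matrix.vecHead,
      Matrix.vecTail, Complex.ext_iff, ← Complex.ofReal_pow] <;> constructor <;> ring

lemma aux_dotAlpha_sub (a b : EuclideanSpace ℝ (Fin 3)) :
    dotAlpha (a - b) = dotAlpha a - dotAlpha b := by
  simp only [dotAlpha, ← Finset.sum_sub_distrib, ← sub_smul]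
  refine Finset.sum_congr rfl fun j _ => ?_
  have : (a - b) j = a j - b j := rfl
  rw [this]; push_cast; ring_nf

lemma aux_abs_coord_le (v : EuclideanSpace ℝ (Fin 3)) (j : Fin 3) : |v j| ≤ ‖v‖ := by
  rw [EuclideanSpace.norm_eq]
  rw [show |v j| = Real.sqrt ((v j)^2) by rw [Real.sqrt_sq_eq_abs]]
  apply Real.sqrt_le_sqrt
  have := Finset.single_le_sum (f := fun i => ‖v i‖^2) (fun i _ => by positivity)
    (Finset.mem_univ j)
  simpa [Real.norm_eq_abs, sq_abs] using this

def Kc : ℝ := ∑ j : Fin 3, ‖Matrix.toEuclideanCLM (𝕜 := ℂ) (alphaM j)‖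

lemma Kc_nonneg : 0 ≤ Kc := Finset.sum_nonneg fun _ _ => norm_nonneg _

lemma aux_T_dotAlpha_le (w : EuclideanSpace ℝ (Fin 3)) :
    ‖Matrix.toEuclideanCLM (𝕜 := ℂ) (dotAlpha w)‖ ≤ Kc * ‖w‖ := by
  have h1 : Matrix.toEuclideanCLM (𝕜 := ℂ) (dotAlpha w)
      = ∑ j, (w j : ℂ) • Matrix.toEuclideanCLM (𝕜 := ℂ) (alphaM j) := by
    simp only [dotAlpha, map_sum]
    exact Finset.sum_congr rfl fun j _ => _root_.map_smul _ _ _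
  rw [h1]
  calc ‖∑ j, (w j : ℂ) • Matrix.toEuclideanCLM (𝕜 := ℂ) (alphaM j)‖
      ≤ ∑ j, ‖(w j : ℂ) • Matrix.toEuclideanCLM (𝕜 := ℂ) (alphaM j)‖ := norm_sum_le _ _
    _ ≤ ∑ j, ‖w‖ * ‖Matrix.toEuclideanCLM (𝕜 := ℂ) (alphaM j)‖ := by
        refine Finset.sum_le_sum fun j _ => ?_
        refine le_trans (ContinuousLinearMap.opNorm_smul_le _ _) ?_
        rw [Complex.norm_real, Real.norm_eq_abs]
        exact mul_le_mul_of_nonneg_right (aux_abs_coord_le w j) (norm_nonneg _)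
    _ = Kc * ‖w‖ := by rw [← Finset.mul_sum, Kc, mul_comm]

lemma aux_chord_le_angle (ξ η : EuclideanSpace ℝ (Fin 3)) (hξ : ξ ≠ 0) (hη : η ≠ 0) :
    ‖‖ξ‖⁻¹ • ξ - ‖η‖⁻¹ • η‖ ≤ InnerProductGeometry.angle ξ η := by
  set θ := InnerProductGeometry.angle ξ η with hθ
  have hθ0 : 0 ≤ θ := InnerProductGeometry.angle_nonneg ξ η
  have hθπ : θ ≤ Real.pi := InnerProductGeometry.angle_le_pi ξ η
  have hnξ : (0:ℝ) < ‖ξ‖ := norm_pos_iff.mpr hξ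
  have hnη : (0:ℝ) < ‖η‖ := norm_pos_iff.mpr hη
  have hcos : Real.cos θ = ⟪ξ, η⟫ / (‖ξ‖ * ‖η‖) := InnerProductGeometry.cos_angle ξ η
  have hsq : ‖‖ξ‖⁻¹ • ξ - ‖η‖⁻¹ • η‖ ^ 2 = 2 - 2 * Real.cos θ := by
    rw [norm_sub_sq_real, hcos]
    rw [real_inner_smul_left, real_inner_smul_right]
    rw [norm_smul, norm_smul]
    simp [Real.norm_eq_abs, abs_of_pos, hnξ, hnη, _root_.abs_of_nonneg (inv_nonneg.2 hnξ.le),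
      _root_.abs_of_nonneg (inv_nonneg.2 hnη.le)]
    field_simp
    ring
  have hcos2 : Real.cos θ = 1 - 2 * Real.sin (θ/2) ^ 2 := by
    have h1 := Real.cos_two_mul (θ/2)
    have h2 := Real.sin_sq_add_cos_sq (θ/2)
    have : 2 * (θ/2) = θ := by ring
    rw [this] at h1
    nlinarith
  have hs0 : 0 ≤ Real.sin (θ/2) :=
    Real.sin_nonneg_of_nonneg_of_le_pi (by linarith) (by linarith [Real.pi_pos])
  have hs : Real.sin (θ/2) ≤ θ/2 := Real.sin_le (by linarith)
  nlinarith [norm_nonneg (‖ξ‖⁻¹ • ξ - ‖η‖⁻¹ • η), hsq]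


/-- ‖Π₊(ξ)Π₋(η)‖ ≤ C·∠(ξ,η) in the operator norm, uniformly in ξ,η ≠ 0. -/
theorem proj_product_angle_bound :
    ∃ C : ℝ, ∀ ξ η : EuclideanSpace ℝ (Fin 3), ξ ≠ 0 → η ≠ 0 →
      ‖Matrix.toEuclideanCLM (𝕜 := ℂ) (projP ξ * projM η)‖
        ≤ C * InnerProductGeometry.angle ξ η := by
  refine ⟨Kc * (1 + Kc), fun ξ η hξ hη => ?_⟩
  set θ := InnerProductGeometry.angle ξ η with hθdef
  have hθ0 : 0 ≤ θ := InnerProductGeometry.angle_nonneg ξ η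
  have hK0 : 0 ≤ Kc := Kc_nonneg
  set ξh : EuclideanSpace ℝ (Fin 3) := ‖ξ‖⁻¹ • ξ with hξh
  set ηh : EuclideanSpace ℝ (Fin 3) := ‖η‖⁻¹ • η with hηh
  have hηu : ‖ηh‖ = 1 := by
    rw [hηh, norm_smul, norm_inv, norm_norm, inv_mul_cancel₀ (norm_ne_zero_iff.mpr hη)]
  have hbb : dotAlpha ηh * dotAlpha ηh = 1 := by
    rw [aux_dotAlpha_sq, hηu]; norm_num
  have e : (1 + dotAlpha ξh) * (1 - dotAlpha ηh)
      = (dotAlpha ξh - dotAlpha ηh) * (1 - dotAlpha ηh) := by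
    have h : (1 + dotAlpha ξh) * (1 - dotAlpha ηh)
        - (dotAlpha ξh - dotAlpha ηh) * (1 - dotAlpha ηh)
        = 1 - dotAlpha ηh * dotAlpha ηh := by noncomm_ring
    have h2 : (1 + dotAlpha ξh) * (1 - dotAlpha ηh)
        - (dotAlpha ξh - dotAlpha ηh) * (1 - dotAlpha ηh) = 0 := by rw [h, hbb, sub_self]
    exact sub_eq_zero.mp h2
  have key : projP ξ * projM η = ((2:ℂ)⁻¹ • dotAlpha (ξh - ηh)) * projM η := by
    rw [aux_dotAlpha_sub]
    show ((2:ℂ)⁻¹ • (1 + dotAlpha ξh)) * ((2:ℂ)⁻¹ • (1 - dotAlpha ηh))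
      = ((2:ℂ)⁻¹ • (dotAlpha ξh - dotAlpha ηh)) * ((2:ℂ)⁻¹ • (1 - dotAlpha ηh))
    rw [Matrix.smul_mul, Matrix.mul_smul, Matrix.smul_mul, Matrix.mul_smul, e]
  have hhalf : ‖((2:ℂ)⁻¹)‖ = 2⁻¹ := by rw [norm_inv]; norm_num
  have hd : ‖ξh - ηh‖ ≤ θ := aux_chord_le_angle ξ η hξ hη
  -- bound on the first factor
  have hfac1 : ‖Matrix.toEuclideanCLM (𝕜 := ℂ) ((2:ℂ)⁻¹ • dotAlpha (ξh - ηh))‖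
      ≤ 2⁻¹ * (Kc * θ) := by
    rw [_root_.map_smul]
    refine le_trans (ContinuousLinearMap.opNorm_smul_le _ _) ?_
    rw [hhalf]
    have h1 := aux_T_dotAlpha_le (ξh - ηh)
    have h2 : Kc * ‖ξh - ηh‖ ≤ Kc * θ := mul_le_mul_of_nonneg_left hd hK0
    nlinarith
  -- bound on the second factor
  have hfac2 : ‖Matrix.toEuclideanCLM (𝕜 := ℂ) (projM η)‖ ≤ 2⁻¹ * (1 + Kc) := by
    show ‖Matrix.toEuclideanCLM (𝕜 := ℂ) (n := Fin 4) ((2:ℂ)⁻¹ • (1 - dotAlpha ηh))‖ ≤ _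
    rw [_root_.map_smul]
    refine le_trans (ContinuousLinearMap.opNorm_smul_le _ _) ?_
    rw [hhalf]
    have h1 : ‖Matrix.toEuclideanCLM (𝕜 := ℂ) (n := Fin 4) (1 - dotAlpha ηh)‖
        ≤ ‖Matrix.toEuclideanCLM (𝕜 := ℂ) (n := Fin 4) (1 : Matrix (Fin 4) (Fin 4) ℂ)‖
          + ‖Matrix.toEuclideanCLM (𝕜 := ℂ) (dotAlpha ηh)‖ := by
      rw [_root_.map_sub]; exact norm_sub_le _ _
    have h2 : ‖Matrix.toEuclideanCLM (𝕜 := ℂ) (n := Fin 4) (1 : Matrix (Fin 4) (Fin 4) ℂ)‖ ≤ 1 := by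
      rw [_root_.map_one, ContinuousLinearMap.one_def]
      exact ContinuousLinearMap.norm_id_le
    have h3 : ‖Matrix.toEuclideanCLM (𝕜 := ℂ) (dotAlpha ηh)‖ ≤ Kc := by
      have := aux_T_dotAlpha_le ηh
      rwa [hηu, mul_one] at this
    nlinarith
  have hmul : ‖Matrix.toEuclideanCLM (𝕜 := ℂ) (projP ξ * projM η)‖
      ≤ ‖Matrix.toEuclideanCLM (𝕜 := ℂ) ((2:ℂ)⁻¹ • dotAlpha (ξh - ηh))‖
        * ‖Matrix.toEuclideanCLM (𝕜 := ℂ) (projM η)‖ := by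
    rw [key, _root_.map_mul]
    exact norm_mul_le _ _
  have hn1 : 0 ≤ ‖Matrix.toEuclideanCLM (𝕜 := ℂ) ((2:ℂ)⁻¹ • dotAlpha (ξh - ηh))‖ :=
    norm_nonneg _
  have hn2 : 0 ≤ ‖Matrix.toEuclideanCLM (𝕜 := ℂ) (projM η)‖ := norm_nonneg _
  nlinarith [mul_le_mul hfac1 hfac2 hn2 (by positivity : (0:ℝ) ≤ 2⁻¹ * (Kc * θ))]
end
end

section
/- For all τ, λ ∈ ℝ and ξ, η ∈ ℝ³, the quantity r₊ = |ξ| − ||η| − |η−ξ|| satisfies r₊ ≤ ||τ| − |ξ|| + |λ + |η|| + |λ − τ + |η−ξ||. -/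
/-- r₊ = |ξ| − ||η| − |η−ξ|| satisfies
r₊ ≤ ||τ|−|ξ|| + |λ+|η|| + |λ−τ+|η−ξ||. -/
theorem r_plus_leibniz (τ lam : ℝ) (ξ η : EuclideanSpace ℝ (Fin 3)) :
    ‖ξ‖ - |‖η‖ - ‖η - ξ‖|
      ≤ |(|τ| - ‖ξ‖)| + |lam + ‖η‖| + |lam - τ + ‖η - ξ‖| := by
  set a := ‖ξ‖
  set b := ‖η‖
  set c := ‖η - ξ‖
  have h1 : |(lam - τ + c) - (lam + b)| ≤ |lam - τ + c| + |lam + b| :=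
    abs_sub _ _
  have h2 : a - |τ| ≤ |(|τ| - a)| := by
    have := neg_abs_le (|τ| - a); linarith
  rcases abs_cases (b - c) with ⟨hb, _⟩ | ⟨hb, _⟩ <;>
  rcases abs_cases τ with ⟨ht, _⟩ | ⟨ht, _⟩ <;>
  rcases abs_cases ((lam - τ + c) - (lam + b)) with ⟨hc, _⟩ | ⟨hc, _⟩ <;>
  linarith
end
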